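/- (Remark on extrema of the mean.) Let E_j(t) be the mean position of the reset telegraph process as in context. Then for every t > 0 and j ∈ {1,2}, the derivative satisfies E_j'(t) = e^{−ξt}·( 2v_j + λt(2 + λt)(v₁ + v₂) )/(2(1 + λt)²). Consequently: (i) if 0 < v₁ < −v₂, then E₁ attains its maximum over (0, ∞) at t_M = −(1/λ)·( 1 + √(v₂² − v₁²)/(v₁ + v₂) ), which is a positive real number; (ii) if 0 < −v₂ < v₁, then E₂ attains its minimum over (0, ∞) at t_m = −(1/λ)·( 1 − √(v₁² − v₂²)/(v₁ + v₂) ), which is a positive real number. -/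

import Mathlib

open MeasureTheory Real Filter Topology Set

noncomputable section

namespace TelegraphReset

open Classical in
/-- Real-valued indicator of a proposition. -/
def ind (P : Prop) : ℝ := if P then 1 else 0

/-- Generalized incomplete gamma function `Γ(0, z₀, z₁) = ∫_{z₀}^{z₁} u⁻¹ e^{-u} du`. -/
def iGamma (z₀ z₁ : ℝ) : ℝ := ∫ u in z₀..z₁, u⁻¹ * Real.exp (-u)

/-- Upper incomplete gamma function `Γ(0, a) = ∫_a^∞ u⁻¹ e^{-u} du`. -/
def uGamma (a : ℝ) : ℝ := ∫ u in Set.Ioi a, u⁻¹ * Real.exp (-u)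

/-- `τ(x,t) = (x - v₂ t)/(v₁ - v₂)`. -/
def tauF (v₁ v₂ x t : ℝ) : ℝ := (x - v₂ * t) / (v₁ - v₂)

/-- The two velocities, indexed by `1` and `2`. -/
def vel (v₁ v₂ : ℝ) : ℕ → ℝ := fun n => if n = 1 then v₁ else v₂

/-- `Γ_λ^ξ(x,t)`, defined piecewise according to the sign of `v₂`. -/
def GamL (v₁ v₂ lam xi x t : ℝ) : ℝ :=
  if v₂ < 0 then iGamma ((max (x / v₁) (x / v₂) + 1 / lam) * xi) ((t + 1 / lam) * xi)
  else iGamma ((x / v₁ + 1 / lam) * xi) ((min (x / v₂) t + 1 / lam) * xi)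

/-- `Θ_λ^ξ(x,t)`, defined piecewise according to the sign of `v₂`. -/
def Theta (v₁ v₂ lam xi x t : ℝ) : ℝ :=
  if v₂ < 0 then
    Real.exp (-(xi * max (x / v₁) (x / v₂))) / (1 + lam * max (x / v₁) (x / v₂))
      - Real.exp (-(xi * t)) / (1 + lam * t)
  else
    Real.exp (-(xi * (x / v₁))) / (1 + lam * (x / v₁))
      - Real.exp (-(xi * min (x / v₂) t)) / (1 + lam * min (x / v₂) t)

/-- Closed-form sub-density `P_{j,j}(x,t)` (Eq. (21)). -/
def Pss (v₁ v₂ lam xi : ℝ) (j : ℕ) (x t : ℝ) : ℝ :=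
  ind (v₂ * t < x ∧ x < v₁ * t) * Real.exp (-(xi * t)) * lam ^ 2 *
      tauF v₁ v₂ x t ^ (2 - j) * (t - tauF v₁ v₂ x t) ^ (j - 1) /
      ((v₁ - v₂) * (1 + lam * t) ^ 2)
  + Real.sign (vel v₁ v₂ j) * ind (0 < x / vel v₁ v₂ j ∧ x / vel v₁ v₂ j < t) * xi *
      Real.exp (-(xi * (x / vel v₁ v₂ j))) / (vel v₁ v₂ j + lam * x)
  + ind (min (v₂ * t) 0 < x ∧ x < v₁ * t) *
      ((-1 : ℝ) ^ (3 - j) * (xi * (vel v₁ v₂ (3 - j) + lam * x) / (v₁ - v₂) ^ 2) *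
          Theta v₁ v₂ lam xi x t
        + (-1 : ℝ) ^ j * (xi * Real.exp (xi / lam) / (v₁ - v₂) ^ 2) *
            (vel v₁ v₂ (3 - j) * (lam + xi) / lam + x * xi) * GamL v₁ v₂ lam xi x t)

/-- Closed-form sub-density `P_{3-j,j}(x,t)` (Eq. (22)). -/
def Pos (v₁ v₂ lam xi : ℝ) (j : ℕ) (x t : ℝ) : ℝ :=
  ind (v₂ * t < x ∧ x < v₁ * t) * Real.exp (-(xi * t)) * lam *
      (1 + lam * tauF v₁ v₂ x t ^ (j - 1) * (t - tauF v₁ v₂ x t) ^ (2 - j)) /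
      ((v₁ - v₂) * (1 + lam * t) ^ 2)
  + ind (min (v₂ * t) 0 < x ∧ x < v₁ * t) *
      ((-1 : ℝ) ^ j * (xi * (vel v₁ v₂ (3 - j) + lam * x) / (v₁ - v₂) ^ 2) *
          Theta v₁ v₂ lam xi x t
        + (-1 : ℝ) ^ (3 - j) * (xi * Real.exp (xi / lam) / (v₁ - v₂) ^ 2) *
            (vel v₁ v₂ j * (lam + xi) / lam + x * xi
              + (-1 : ℝ) ^ j * xi * (v₁ - v₂) / lam) * GamL v₁ v₂ lam xi x t)

/-- Closed-form reset density `p̃(x,t|v_j)` (Eq. (37)). -/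
def pTil (v₁ v₂ lam xi : ℝ) (j : ℕ) (x t : ℝ) : ℝ :=
  Real.sign (vel v₁ v₂ j) * ind (0 < x / vel v₁ v₂ j ∧ x / vel v₁ v₂ j < t) * xi *
      Real.exp (-(xi * (x / vel v₁ v₂ j))) / (vel v₁ v₂ j + lam * x)
  + ind (v₂ * t < x ∧ x < v₁ * t) * lam * Real.exp (-(xi * t)) /
      ((v₁ - v₂) * (1 + lam * t))
  + ind (min (v₂ * t) 0 < x ∧ x < v₁ * t) *
      (xi * Real.exp (xi / lam) / (v₁ - v₂)) * GamL v₁ v₂ lam xi x t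

/-- First moment `E_j[X̃(t)]` (Eq. (54)). -/
def Emom (v₁ v₂ lam xi : ℝ) (j : ℕ) (t : ℝ) : ℝ :=
  (1 - Real.exp (-(xi * t))) *
      ((v₁ + v₂) / (2 * xi) + (vel v₁ v₂ j - vel v₁ v₂ (3 - j)) / (2 * lam))
  - xi * Real.exp (xi / lam) * (vel v₁ v₂ j - vel v₁ v₂ (3 - j)) / (2 * lam ^ 2) *
      iGamma (xi / lam) (xi / lam * (1 + lam * t))
  + t * Real.exp (-(xi * t)) * (vel v₁ v₂ j - vel v₁ v₂ (3 - j)) / (2 * (1 + lam * t))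

/-- Second moment `E_j[X̃²(t)]` (Eq. (55)). -/
def Smom (v₁ v₂ lam xi : ℝ) (j : ℕ) (t : ℝ) : ℝ :=
  (1 - Real.exp (-(xi * t))) *
      (2 * (v₁ ^ 2 + v₁ * v₂ + v₂ ^ 2) / (3 * xi ^ 2)
        + (2 * vel v₁ v₂ j ^ 2 - v₁ * v₂ - vel v₁ v₂ (3 - j) ^ 2) / (3 * lam) *
            (1 / xi - 1 / lam))
  - t * Real.exp (-(xi * t)) *
      (2 * (v₁ ^ 2 + v₁ * v₂ + v₂ ^ 2) / (3 * xi)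
        + (2 * vel v₁ v₂ j ^ 2 - v₁ * v₂ - vel v₁ v₂ (3 - j) ^ 2) /
            (3 * lam * (1 + lam * t)))
  + xi * Real.exp (xi / lam) *
      (2 * vel v₁ v₂ j ^ 2 - v₁ * v₂ - vel v₁ v₂ (3 - j) ^ 2) / (3 * lam ^ 3) *
      iGamma (xi / lam) (xi / lam * (1 + lam * t))

/-- First moment of the reset-free process. -/
def m1 (v₁ v₂ lam : ℝ) (j : ℕ) (t : ℝ) : ℝ :=
  (v₁ + v₂) * t / 2 + (vel v₁ v₂ j - vel v₁ v₂ (3 - j)) * t / (2 * (1 + lam * t))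

/-- Second moment of the reset-free process (Eq. (63)). -/
def m2 (v₁ v₂ lam : ℝ) (j : ℕ) (t : ℝ) : ℝ :=
  t ^ 2 * (3 * vel v₁ v₂ j ^ 2 + lam * t * (v₁ ^ 2 + v₁ * v₂ + v₂ ^ 2)) /
    (3 * (1 + lam * t))

/-! The chain rule turns the derivative of `Γ(0, ξ/λ, ξ/λ (1 + λt))` into
`λ e^{-ξ/λ} e^{-ξt} / (1 + λt)`, whose factor `e^{-ξ/λ}` cancels the prefactor `e^{ξ/λ}`, so
`E_j'(t)` is `e^{-ξt} ((v₁ + v₂)(1 + λt)² + v_j - v_{j'}) / (2 (1 + λt)²)`. For `j = 1` and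
`v₁ + v₂ < 0 < v₁` the numerator is `(v₁ + v₂)((1 + λt)² - (1 + λt_M)²)`, positive before `t_M` and
negative after it, so `E₁` rises and then falls. Replacing `(v₁, v₂)` by `(-v₂, -v₁)` turns `E₂`
into `-E₁` and case (ii) into case (i). -/

lemma hasDerivAt_iGamma_right {a b : ℝ} (ha : 0 < a) (hb : 0 < b) :
    HasDerivAt (iGamma a) (b⁻¹ * Real.exp (-b)) b := by
  have hcont : ContinuousOn (fun u : ℝ => u⁻¹ * Real.exp (-u)) (Ioi 0) :=
    (continuousOn_inv₀.mono fun _ hu => ne_of_gt hu).mul (by fun_prop)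
  refine intervalIntegral.integral_hasDerivAt_right ?_
    (hcont.stronglyMeasurableAtFilter isOpen_Ioi b hb)
    (hcont.continuousAt (Ioi_mem_nhds hb))
  exact (hcont.mono fun u hu => lt_of_lt_of_le (lt_min ha hb) hu.1).intervalIntegrable

lemma hasDerivAt_iGamma_affine {lam xi t : ℝ} (hlam : 0 < lam) (hxi : 0 < xi)
    (ht : 0 < 1 + lam * t) :
    HasDerivAt (fun s => iGamma (xi / lam) (xi / lam * (1 + lam * s)))
      (lam * Real.exp (-(xi / lam)) * Real.exp (-(xi * t)) / (1 + lam * t)) t := by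
  have hb : HasDerivAt (fun s : ℝ => xi / lam * (1 + lam * s)) xi t := by
    refine (((hasDerivAt_id' t).const_mul lam).const_add 1 |>.const_mul (xi / lam)).congr_deriv ?_
    field_simp
  refine ((hasDerivAt_iGamma_right (by positivity) (by positivity)).comp t hb).congr_deriv ?_
  have hexp : -(xi / lam * (1 + lam * t)) = -(xi / lam) + -(xi * t) := by field_simp; ring
  rw [hexp, Real.exp_add]
  field_simp

lemma hasDerivAt_Emom {v₁ v₂ lam xi t : ℝ} (j : ℕ) (hlam : 0 < lam) (hxi : 0 < xi)
    (ht : 0 < 1 + lam * t) :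
    HasDerivAt (Emom v₁ v₂ lam xi j)
      (Real.exp (-(xi * t)) * ((v₁ + v₂) * (1 + lam * t) ^ 2 + (vel v₁ v₂ j - vel v₁ v₂ (3 - j)))
        / (2 * (1 + lam * t) ^ 2)) t := by
  have hexp : HasDerivAt (fun s => Real.exp (-(xi * s))) (-xi * Real.exp (-(xi * t))) t := by
    simpa [mul_comm] using ((hasDerivAt_id' t).const_mul xi).neg.exp
  have hden : HasDerivAt (fun s => 2 * (1 + lam * s)) (2 * lam) t := by
    simpa using (((hasDerivAt_id' t).const_mul lam).const_add 1).const_mul 2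
  have hsum := (((hexp.const_sub 1).mul_const
      ((v₁ + v₂) / (2 * xi) + (vel v₁ v₂ j - vel v₁ v₂ (3 - j)) / (2 * lam))).sub
    ((hasDerivAt_iGamma_affine hlam hxi ht).const_mul
      (xi * Real.exp (xi / lam) * (vel v₁ v₂ j - vel v₁ v₂ (3 - j)) / (2 * lam ^ 2)))).add
    ((((hasDerivAt_id' t).mul hexp).mul_const (vel v₁ v₂ j - vel v₁ v₂ (3 - j))).div hden
      (by positivity))
  refine hsum.congr_deriv ?_
  have : 1 + t * lam ≠ 0 := by rw [mul_comm]; exact ht.ne'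
  simp only [Pi.mul_apply, Real.exp_neg (xi / lam)]
  field_simp
  ring

lemma Emom_neg_swap (v₁ v₂ lam xi t : ℝ) :
    Emom (-v₂) (-v₁) lam xi 1 t = -Emom v₁ v₂ lam xi 2 t := by
  simp only [Emom, vel]
  norm_num
  ring

lemma isMaxOn_Ioi_of_hasDerivAt {f f' : ℝ → ℝ} {a b : ℝ} (hab : a < b)
    (hf : ∀ x ∈ Ioi a, HasDerivAt f (f' x) x) (hinc : ∀ x ∈ Ioo a b, 0 ≤ f' x)
    (hdec : ∀ x ∈ Ioi b, f' x ≤ 0) :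
    IsMaxOn f (Ioi a) b := by
  have hcont : ContinuousOn f (Ioi a) := fun x hx => (hf x hx).continuousAt.continuousWithinAt
  refine isMaxOn_Ioi_of_mono_anti ?_ ?_
  · refine monotoneOn_of_hasDerivWithinAt_nonneg (f' := f') (convex_Ioc a b)
      (hcont.mono Ioc_subset_Ioi_self) ?_ ?_ <;> rw [interior_Ioc]
    · exact fun x hx => (hf x hx.1).hasDerivWithinAt
    · exact hinc
  · refine antitoneOn_of_hasDerivWithinAt_nonpos (f' := f') (convex_Ici b)
      (hcont.mono (Ici_subset_Ioi.2 hab)) ?_ ?_ <;> rw [interior_Ici]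
    · exact fun x hx => (hf x (hab.trans hx)).hasDerivWithinAt
    · exact hdec

def tMax (v₁ v₂ lam : ℝ) : ℝ := -(1 / lam) * (1 + √(v₂ ^ 2 - v₁ ^ 2) / (v₁ + v₂))

lemma one_add_mul_tMax {v₁ v₂ lam : ℝ} (hlam : lam ≠ 0) (hc : v₁ + v₂ ≠ 0) :
    1 + lam * tMax v₁ v₂ lam = √(v₂ ^ 2 - v₁ ^ 2) / -(v₁ + v₂) := by
  simp only [tMax]
  field_simp
  ring

lemma mul_one_add_mul_tMax_sq {v₁ v₂ lam : ℝ} (hlam : lam ≠ 0) (hc : v₁ + v₂ ≠ 0)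
    (hv : v₁ ^ 2 ≤ v₂ ^ 2) :
    (v₁ + v₂) * (1 + lam * tMax v₁ v₂ lam) ^ 2 = v₂ - v₁ := by
  rw [one_add_mul_tMax hlam hc, div_pow, neg_sq, sq_sqrt (sub_nonneg.2 hv)]
  field_simp
  ring

lemma tMax_pos {v₁ v₂ lam : ℝ} (hlam : 0 < lam) (hv₁ : 0 < v₁) (hv : v₁ < -v₂) :
    0 < tMax v₁ v₂ lam := by
  have hroot : -(v₁ + v₂) < √(v₂ ^ 2 - v₁ ^ 2) := (lt_sqrt (by linarith)).2 (by nlinarith)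
  have : 1 < 1 + lam * tMax v₁ v₂ lam := by
    rw [one_add_mul_tMax hlam.ne' (by linarith)]
    exact (one_lt_div (by linarith)).2 hroot
  nlinarith

lemma tMax_neg_swap (v₁ v₂ lam : ℝ) :
    tMax (-v₂) (-v₁) lam = -(1 / lam) * (1 - √(v₁ ^ 2 - v₂ ^ 2) / (v₁ + v₂)) := by
  rw [tMax, neg_sq, neg_sq, show -v₂ + -v₁ = -(v₁ + v₂) by ring, div_neg, ← sub_eq_add_neg]

lemma isMaxOn_Emom_one {v₁ v₂ lam xi : ℝ} (hlam : 0 < lam) (hxi : 0 < xi) (hv₁ : 0 < v₁)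
    (hv : v₁ < -v₂) :
    0 < tMax v₁ v₂ lam ∧ IsMaxOn (Emom v₁ v₂ lam xi 1) (Ioi 0) (tMax v₁ v₂ lam) := by
  set tM := tMax v₁ v₂ lam
  have htM : 0 < tM := tMax_pos hlam hv₁ hv
  have hc : v₁ + v₂ < 0 := by linarith
  have hroot := mul_one_add_mul_tMax_sq hlam.ne' hc.ne (by nlinarith)
  have hderiv : ∀ s ∈ Ioi 0, HasDerivAt (Emom v₁ v₂ lam xi 1)
      (Real.exp (-(xi * s)) * ((v₁ + v₂) * ((1 + lam * s) ^ 2 - (1 + lam * tM) ^ 2))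
        / (2 * (1 + lam * s) ^ 2)) s := by
    intro s (hs : 0 < s)
    refine (hasDerivAt_Emom 1 hlam hxi (by positivity)).congr_deriv ?_
    norm_num [vel]
    linear_combination (Real.exp (-(xi * s)) / (2 * (1 + lam * s) ^ 2)) * hroot
  refine ⟨htM, isMaxOn_Ioi_of_hasDerivAt htM hderiv ?_ ?_⟩
  · intro s hs
    have : (1 + lam * s) ^ 2 ≤ (1 + lam * tM) ^ 2 :=
      pow_le_pow_left₀ (by nlinarith [hs.1]) (by nlinarith [hs.2]) 2
    exact div_nonneg (mul_nonneg (exp_pos _).le (mul_nonneg_of_nonpos_of_nonpos hc.le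
      (by linarith))) (by positivity)
  · intro s (hs : tM < s)
    have : (1 + lam * tM) ^ 2 ≤ (1 + lam * s) ^ 2 :=
      pow_le_pow_left₀ (by nlinarith) (by nlinarith) 2
    exact div_nonpos_of_nonpos_of_nonneg (mul_nonpos_of_nonneg_of_nonpos (exp_pos _).le
      (mul_nonpos_of_nonpos_of_nonneg hc.le (by linarith))) (by positivity)

theorem mean_extrema_general (v₁ v₂ lam xi : ℝ) (hlam : 0 < lam) (hxi : 0 < xi) :
    (∀ j : ℕ, (j = 1 ∨ j = 2) → ∀ t : ℝ, 0 < t →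
      HasDerivAt (fun s => Emom v₁ v₂ lam xi j s)
        (Real.exp (-(xi * t)) *
          (2 * vel v₁ v₂ j + lam * t * (2 + lam * t) * (v₁ + v₂)) /
          (2 * (1 + lam * t) ^ 2)) t)
    ∧ (0 < v₁ → v₁ < -v₂ →
        0 < -(1 / lam) * (1 + Real.sqrt (v₂ ^ 2 - v₁ ^ 2) / (v₁ + v₂))
        ∧ IsMaxOn (fun s => Emom v₁ v₂ lam xi 1 s) (Set.Ioi 0)
            (-(1 / lam) * (1 + Real.sqrt (v₂ ^ 2 - v₁ ^ 2) / (v₁ + v₂))))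
    ∧ (0 < -v₂ → -v₂ < v₁ →
        0 < -(1 / lam) * (1 - Real.sqrt (v₁ ^ 2 - v₂ ^ 2) / (v₁ + v₂))
        ∧ IsMinOn (fun s => Emom v₁ v₂ lam xi 2 s) (Set.Ioi 0)
            (-(1 / lam) * (1 - Real.sqrt (v₁ ^ 2 - v₂ ^ 2) / (v₁ + v₂)))) := by
  refine ⟨fun j hj t ht => ?_, isMaxOn_Emom_one hlam hxi, fun hv₂ hv => ?_⟩
  · refine (hasDerivAt_Emom j hlam hxi (by positivity)).congr_deriv ?_
    rcases hj with rfl | rfl <;> norm_num [vel] <;> ring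
  · obtain ⟨hpos, hmax⟩ := isMaxOn_Emom_one (v₁ := -v₂) (v₂ := -v₁) hlam hxi hv₂ (by linarith)
    rw [tMax_neg_swap] at hpos hmax
    exact ⟨hpos, by simpa [Emom_neg_swap] using hmax.neg⟩

/-- Remark on extrema of the mean: derivative of the mean, and location of its
maximum/minimum over `(0,∞)` in the two velocity regimes. -/
theorem mean_extrema (v₁ v₂ lam xi : ℝ) (hlam : 0 < lam) (hxi : 0 < xi)
    (hv : v₂ < v₁) (hv1 : v₁ ≠ 0) (hv2 : v₂ ≠ 0) :
    (∀ j : ℕ, (j = 1 ∨ j = 2) → ∀ t : ℝ, 0 < t →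
      HasDerivAt (fun s => Emom v₁ v₂ lam xi j s)
        (Real.exp (-(xi * t)) *
          (2 * vel v₁ v₂ j + lam * t * (2 + lam * t) * (v₁ + v₂)) /
          (2 * (1 + lam * t) ^ 2)) t)
    ∧ (0 < v₁ → v₁ < -v₂ →
        0 < -(1 / lam) * (1 + Real.sqrt (v₂ ^ 2 - v₁ ^ 2) / (v₁ + v₂))
        ∧ IsMaxOn (fun s => Emom v₁ v₂ lam xi 1 s) (Set.Ioi 0)
            (-(1 / lam) * (1 + Real.sqrt (v₂ ^ 2 - v₁ ^ 2) / (v₁ + v₂))))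
    ∧ (0 < -v₂ → -v₂ < v₁ →
        0 < -(1 / lam) * (1 - Real.sqrt (v₁ ^ 2 - v₂ ^ 2) / (v₁ + v₂))
        ∧ IsMinOn (fun s => Emom v₁ v₂ lam xi 2 s) (Set.Ioi 0)
            (-(1 / lam) * (1 - Real.sqrt (v₁ ^ 2 - v₂ ^ 2) / (v₁ + v₂)))) :=
  mean_extrema_general v₁ v₂ lam xi hlam hxi

end TelegraphReset
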